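/- Let 0 < p < 1 and let X be a positive random variable with atomless law satisfying the distributional identity X ~ 1/X + ε with ε ~ Bernoulli(p) independent of X. Then E[log(X)·1_{X<1}] = (p − 1)·E[log(X)·1_{X>1}]. -/

import Mathlib

/-!
On `{ε = 1}` we have `1 / X + ε > 1`, and on `{ε = 0}` the event `1 / X + ε < 1` is `{X > 1}`,
where `log (1 / X + ε) = -log X`. Since `X` and `1 / X + ε` have the same law,
`E[log X; X < 1] = E[-log X; X > 1, ε = 0]`, and independence splits off `P(ε = 0) = 1 - p`.
-/

open MeasureTheory ProbabilityTheory Real Set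

section
variable {Ω α β : Type*} [MeasurableSpace Ω] [MeasurableSpace α] [MeasurableSpace β]
  {μ : Measure Ω}

theorem setIntegral_preimage_eq_integral_indicator_comp {E : Type*} [NormedAddCommGroup E]
    [NormedSpace ℝ E] {X : Ω → α} (hX : Measurable X) {s : Set α} (hs : MeasurableSet s) (f : α → E) :
    ∫ ω in X ⁻¹' s, f (X ω) ∂μ = ∫ ω, s.indicator f (X ω) ∂μ := by
  rw [← integral_indicator (hX hs)]
  rfl

theorem ProbabilityTheory.IndepFun.setIntegral_preimage_eq_measureReal_mul {X : Ω → α}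
    {Y : Ω → β} (hXY : IndepFun X Y μ) (hX : Measurable X) (hY : Measurable Y) {f : α → ℝ}
    (hf : Measurable f) {t : Set β} (ht : MeasurableSet t) :
    ∫ ω in Y ⁻¹' t, f (X ω) ∂μ = μ.real (Y ⁻¹' t) * ∫ ω, f (X ω) ∂μ := by
  have hprod : (Y ⁻¹' t).indicator (fun ω => f (X ω)) =
      fun ω => f (X ω) * t.indicator 1 (Y ω) := by
    ext ω
    by_cases h : Y ω ∈ t <;> simp [h]
  rw [← integral_indicator_one (hY ht), ← integral_indicator (hY ht), mul_comm, hprod]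
  exact hXY.integral_fun_comp_mul_comp (g := t.indicator 1) hX.aemeasurable hY.aemeasurable
    hf.aestronglyMeasurable (measurable_one.indicator ht).aestronglyMeasurable

theorem ae_eq_zero_or_eq_one_of_measure_eq [IsProbabilityMeasure μ] {ε : Ω → ℝ}
    (hε : Measurable ε) {p : ℝ} (hp0 : 0 ≤ p) (hp1 : p ≤ 1)
    (h1 : μ {ω | ε ω = 1} = ENNReal.ofReal p) (h0 : μ {ω | ε ω = 0} = ENNReal.ofReal (1 - p)) :
    ∀ᵐ ω ∂μ, ε ω = 0 ∨ ε ω = 1 := by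
  have h0m : MeasurableSet {ω | ε ω = 0} := hε (measurableSet_singleton 0)
  have h1m : MeasurableSet {ω | ε ω = 1} := hε (measurableSet_singleton 1)
  have hdisj : Disjoint {ω | ε ω = 0} {ω | ε ω = 1} :=
    disjoint_left.2 fun ω (h0 : ε ω = 0) (h1 : ε ω = 1) => by simp [h0] at h1
  refine (ae_mem_iff_measure_eq (h0m.union h1m).nullMeasurableSet).2 ?_
  rw [measure_univ, measure_union hdisj h1m, h0, h1, ← ENNReal.ofReal_add (by linarith) hp0]
  norm_num

end

theorem indicator_Iio_log_inv {x : ℝ} (hx : 0 < x) :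
    (Iio 1).indicator log x⁻¹ = -(Ioi 1).indicator log x := by
  by_cases h : 1 < x
  · rw [indicator_of_mem (show x⁻¹ ∈ Iio 1 from inv_lt_one_of_one_lt₀ h),
      indicator_of_mem (mem_Ioi.2 h), log_inv]
  · rw [indicator_of_notMem (by simpa [inv_lt_one₀ hx] using h),
      indicator_of_notMem (by simpa using h), neg_zero]

theorem indicator_Iio_log_inv_add_one {x : ℝ} (hx : 0 ≤ x) :
    (Iio 1).indicator log (x⁻¹ + 1) = 0 :=
  indicator_of_notMem (by simpa using inv_nonneg.2 hx) _

theorem bernoulli_p_indicator_identity_lt_general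
    {Ω : Type*} [MeasureSpace Ω] [IsProbabilityMeasure (ℙ : Measure Ω)]
    (p : ℝ) (hp0 : 0 < p) (hp1 : p < 1)
    (X ε : Ω → ℝ) (hXm : Measurable X) (hεm : Measurable ε)
    (hXpos : ∀ᵐ ω ∂ℙ, 0 < X ω)
    (hε1 : ℙ {ω | ε ω = 1} = ENNReal.ofReal p)
    (hε0 : ℙ {ω | ε ω = 0} = ENNReal.ofReal (1 - p))
    (hindep : IndepFun X ε ℙ)
    (hdist : Measure.map X ℙ = Measure.map (fun ω => 1 / X ω + ε ω) ℙ) :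
    ∫ ω in {ω | X ω < 1}, Real.log (X ω) ∂ℙ =
      (p - 1) * ∫ ω in {ω | 1 < X ω}, Real.log (X ω) ∂ℙ := by
  have hident : IdentDistrib X (fun ω => 1 / X ω + ε ω) ℙ ℙ :=
    ⟨hXm.aemeasurable, ((measurable_const.div hXm).add hεm).aemeasurable, hdist⟩
  have hε01 := ae_eq_zero_or_eq_one_of_measure_eq hεm hp0.le hp1.le hε1 hε0
  have hshift : ∫ ω, (Iio 1).indicator log (1 / X ω + ε ω) ∂ℙ =
      ∫ ω in ε ⁻¹' {0}, -(Ioi 1).indicator log (X ω) ∂ℙ := by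
    rw [← integral_indicator (hεm (measurableSet_singleton 0))]
    refine integral_congr_ae ?_
    filter_upwards [hXpos, hε01] with ω hx hε
    rcases hε with hε | hε <;>
      simp [hε, indicator_Iio_log_inv hx, indicator_Iio_log_inv_add_one hx.le]
  calc ∫ ω in {ω | X ω < 1}, Real.log (X ω) ∂ℙ
      = ∫ ω, (Iio 1).indicator log (X ω) ∂ℙ :=
        setIntegral_preimage_eq_integral_indicator_comp hXm measurableSet_Iio log
    _ = ∫ ω, (Iio 1).indicator log (1 / X ω + ε ω) ∂ℙ :=
        (hident.comp (measurable_log.indicator measurableSet_Iio)).integral_eq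
    _ = (ℙ : Measure Ω).real (ε ⁻¹' {0}) * ∫ ω, -(Ioi 1).indicator log (X ω) ∂ℙ :=
        hshift.trans (hindep.setIntegral_preimage_eq_measureReal_mul hXm hεm
          (measurable_log.indicator measurableSet_Ioi).neg (measurableSet_singleton 0))
    _ = (1 - p) * -∫ ω in {ω | 1 < X ω}, log (X ω) ∂ℙ := by
        rw [integral_neg, ← setIntegral_preimage_eq_integral_indicator_comp hXm measurableSet_Ioi,
          measureReal_def, show ε ⁻¹' {0} = {ω | ε ω = 0} from rfl, hε0,
          ENNReal.toReal_ofReal (by linarith)]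
        rfl
    _ = (p - 1) * ∫ ω in {ω | 1 < X ω}, log (X ω) ∂ℙ := by ring

/-- For the Bernoulli(p) invariant distribution `X ~ 1/X + ε`:
`E[log(X)·1_{X<1}] = (p − 1)·E[log(X)·1_{X>1}]`. -/
theorem bernoulli_p_indicator_identity_lt
    {Ω : Type*} [MeasureSpace Ω] [IsProbabilityMeasure (ℙ : Measure Ω)]
    (p : ℝ) (hp0 : 0 < p) (hp1 : p < 1)
    (X ε : Ω → ℝ) (hXm : Measurable X) (hεm : Measurable ε)
    (hXpos : ∀ᵐ ω ∂ℙ, 0 < X ω)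
    (hatomless : ∀ c : ℝ, ℙ {ω | X ω = c} = 0)
    (hε1 : ℙ {ω | ε ω = 1} = ENNReal.ofReal p)
    (hε0 : ℙ {ω | ε ω = 0} = ENNReal.ofReal (1 - p))
    (hindep : IndepFun X ε ℙ)
    (hdist : Measure.map X ℙ = Measure.map (fun ω => 1 / X ω + ε ω) ℙ)
    (hint : Integrable (fun ω => Real.log (X ω)) ℙ) :
    ∫ ω in {ω | X ω < 1}, Real.log (X ω) ∂ℙ =
      (p - 1) * ∫ ω in {ω | 1 < X ω}, Real.log (X ω) ∂ℙ :=
  bernoulli_p_indicator_identity_lt_general p hp0 hp1 X ε hXm hεm hXpos hε1 hε0 hindep hdist
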